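/- arXiv:1502.06535 — 5 statements merged into one kernel-verified Lean document; each statement's English description precedes it below -/
import Mathlib

section
/- Let (X,d) be a metric space, f : X → X continuous, K ⊆ X compact, and φ : K → ℝ continuous. Suppose a point x ∈ K is controlled at all scales with respect to φ: there exist sequences t_i → ∞ of positive integers and β_i → 0 of positive reals such that for every i, the whole forward orbit of x stays in K and there is an infinite set P_i ⊆ ℕ of control times containing 0 with consecutive elements k < ℓ satisfying ℓ − k ≤ t_i and |(1/(ℓ−k)) ∑_{j=k}^{ℓ−1} φ(f^j(x))| ≤ β_i. Then for every point y in the ω-limit set of x, the Birkhoff averages (1/n) ∑_{j=0}^{n−1} φ(f^j(y)) converge to 0 as n → ∞, and the convergence is uniform over ω(x). -/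
/-! Write `S k` for the Birkhoff sum of length `k` at `x`. At scale `(β, t)`, the control times
form a `t`-dense set along which `S` is `β`-Lipschitz, while `S` is `M`-Lipschitz everywhere,
`M ≥ |φ|` on `K`. Comparing `k` and `k + n` with the control times just below them gives
`|S (k + n) - S k| ≤ β n + (β + 2M) t` for every `k`. The bound passes to every `y ∈ ω(x)`
by continuity, and letting the scale go to `0` yields uniformly sublinear Birkhoff sums on
`ω(x)`. -/

open Filter Topology Set

variable {X : Type*} [MetricSpace X]

/-- Birkhoff sum of `φ` of length `n` along the orbit of `f`. -/
noncomputable def birkhoff (f : X → X) (φ : X → ℝ) (n : ℕ) (x : X) : ℝ :=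
  ∑ i ∈ Finset.range n, φ (f^[i] x)

/-- `x` is `(β, t, ∞)`-controlled: its whole forward orbit stays in `K` and there is an
infinite set `P` of control times containing `0` whose consecutive elements `k < l`
satisfy `l - k ≤ t` and `|birkhoff (l-k) (f^[k] x)| ≤ β * (l - k)`. -/
def ControlledAt (f : X → X) (K : Set X) (φ : X → ℝ) (β : ℝ) (t : ℕ) (x : X) : Prop :=
  (∀ n : ℕ, f^[n] x ∈ K) ∧
  ∃ P : Set ℕ, 0 ∈ P ∧ P.Infinite ∧
    ∀ k ∈ P, ∀ l ∈ P, k < l → (∀ m ∈ P, ¬(k < m ∧ m < l)) →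
      l - k ≤ t ∧ |birkhoff f φ (l - k) (f^[k] x)| ≤ β * ((l - k : ℕ) : ℝ)

/-- `x` is controlled at all scales with respect to `φ`. -/
def ControlledAllScales (f : X → X) (K : Set X) (φ : X → ℝ) (x : X) : Prop :=
  ∃ (t : ℕ → ℕ) (β : ℕ → ℝ), (∀ i, 0 < t i) ∧ (∀ i, 0 < β i) ∧
    Tendsto t atTop atTop ∧ Tendsto β atTop (𝓝 0) ∧
    ∀ i, ControlledAt f K φ (β i) (t i) x

section ControlTimes

variable {P : Set ℕ}

theorem Set.Infinite.exists_consecutive_gt (hP : P.Infinite) (k : ℕ) :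
    ∃ l ∈ P, k < l ∧ ∀ m ∈ P, ¬(k < m ∧ m < l) := by
  classical
  have h : ∃ l, l ∈ P ∧ k < l := hP.exists_gt k
  exact ⟨Nat.find h, (Nat.find_spec h).1, (Nat.find_spec h).2,
    fun m hm ⟨hkm, hml⟩ => Nat.find_min h hml ⟨hm, hkm⟩⟩

theorem exists_mem_le_lt_add_of_consecutive_sub_le {t : ℕ} (hP0 : 0 ∈ P) (hP : P.Infinite)
    (hgap : ∀ k ∈ P, ∀ l ∈ P, k < l → (∀ m ∈ P, ¬(k < m ∧ m < l)) → l - k ≤ t) (k : ℕ) :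
    ∃ a ∈ P, a ≤ k ∧ k < a + t := by
  classical
  set a := Nat.findGreatest (· ∈ P) k
  have haP : a ∈ P := Nat.findGreatest_spec (Nat.zero_le k) hP0
  obtain ⟨l, hlP, hal, hcons⟩ := hP.exists_consecutive_gt a
  have hkl : k < l := by
    by_contra! hlk
    exact Nat.findGreatest_is_greatest hal hlk hlP
  have := hgap a haP l hlP hal hcons
  exact ⟨a, haP, Nat.findGreatest_le k, by omega⟩

variable {S : ℕ → ℝ} {β : ℝ}

theorem abs_sub_le_of_consecutive
    (hstep : ∀ k ∈ P, ∀ l ∈ P, k < l → (∀ m ∈ P, ¬(k < m ∧ m < l)) →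
      |S l - S k| ≤ β * (l - k))
    {a b : ℕ} (ha : a ∈ P) (hb : b ∈ P) (hab : a ≤ b) : |S b - S a| ≤ β * (b - a) := by
  classical
  induction b using Nat.strong_induction_on with
  | _ b ih =>
  rcases hab.eq_or_lt with rfl | hlt
  · simp
  set c := Nat.findGreatest (· ∈ P) (b - 1)
  have hcP : c ∈ P := Nat.findGreatest_spec (m := a) (by omega) ha
  have hac : a ≤ c := Nat.le_findGreatest (by omega) ha
  have hcb : c < b := (Nat.findGreatest_le (b - 1)).trans_lt (by omega)
  have hcons : ∀ m ∈ P, ¬(c < m ∧ m < b) := fun m hm ⟨hcm, hmb⟩ =>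
    (Nat.le_findGreatest (by omega) hm).not_gt hcm
  calc |S b - S a| = |(S b - S c) + (S c - S a)| := by ring_nf
    _ ≤ |S b - S c| + |S c - S a| := abs_add_le _ _
    _ ≤ β * (b - c) + β * (c - a) :=
        add_le_add (hstep c hcP b hb hcb hcons) (ih c hcb hcP hac)
    _ = β * (b - a) := by ring

theorem abs_sub_le_mul_abs_sub_of_consecutive
    (hstep : ∀ k ∈ P, ∀ l ∈ P, k < l → (∀ m ∈ P, ¬(k < m ∧ m < l)) →
      |S l - S k| ≤ β * (l - k))
    {a b : ℕ} (ha : a ∈ P) (hb : b ∈ P) : |S b - S a| ≤ β * |(b : ℝ) - a| := by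
  rcases le_total a b with hab | hba
  · rw [abs_of_nonneg (sub_nonneg.2 (Nat.cast_le.2 hab))]
    exact abs_sub_le_of_consecutive hstep ha hb hab
  · rw [abs_sub_comm, abs_sub_comm (b : ℝ), abs_of_nonneg (sub_nonneg.2 (Nat.cast_le.2 hba))]
    exact abs_sub_le_of_consecutive hstep hb ha hba

theorem abs_sub_le_of_abs_succ_sub_le {M : ℝ} (hS : ∀ k, |S (k + 1) - S k| ≤ M)
    {a b : ℕ} (hab : a ≤ b) : |S b - S a| ≤ M * (b - a) := by
  have h := dist_le_Ico_sum_of_dist_le (f := S) hab (d := fun _ => M)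
    fun _ _ => by rw [Real.dist_eq, abs_sub_comm]; exact hS _
  rw [Real.dist_eq, abs_sub_comm] at h
  simpa [Nat.cast_sub hab, mul_comm] using h

theorem abs_sub_le_of_control {M : ℝ} {t : ℕ} (hβ : 0 ≤ β)
    (hP0 : 0 ∈ P) (hP : P.Infinite)
    (hcontrol : ∀ k ∈ P, ∀ l ∈ P, k < l → (∀ m ∈ P, ¬(k < m ∧ m < l)) →
      l - k ≤ t ∧ |S l - S k| ≤ β * (l - k))
    (hS : ∀ k, |S (k + 1) - S k| ≤ M) (k n : ℕ) :
    |S (k + n) - S k| ≤ β * n + (β + 2 * M) * t := by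
  have hgap := fun k hk l hl hkl hc => (hcontrol k hk l hl hkl hc).1
  obtain ⟨a, haP, hak, hka⟩ := exists_mem_le_lt_add_of_consecutive_sub_le hP0 hP hgap k
  obtain ⟨b, hbP, hbk, hkb⟩ := exists_mem_le_lt_add_of_consecutive_sub_le hP0 hP hgap (k + n)
  have hM : 0 ≤ M := (abs_nonneg _).trans (hS 0)
  have hka' : (k : ℝ) - a ≤ t := by
    have : (k : ℝ) < a + t := by exact_mod_cast hka
    linarith
  have hkb' : (k : ℝ) + n - b ≤ t := by
    have : ((k + n : ℕ) : ℝ) < b + t := by exact_mod_cast hkb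
    push_cast at this
    linarith
  have hak' : (a : ℝ) ≤ k := by exact_mod_cast hak
  have hbk' : (b : ℝ) ≤ k + n := by exact_mod_cast hbk
  have hba : |(b : ℝ) - a| ≤ n + t := abs_sub_le_iff.2 ⟨by linarith, by linarith⟩
  have h₁ := abs_sub_le_of_abs_succ_sub_le hS hak
  have h₂ := abs_sub_le_of_abs_succ_sub_le hS hbk
  have h₃ := abs_sub_le_mul_abs_sub_of_consecutive (fun k hk l hl hkl hc =>
    (hcontrol k hk l hl hkl hc).2) haP hbP
  push_cast at h₂
  calc |S (k + n) - S k| = |(S (k + n) - S b) + (S b - S a) - (S k - S a)| := by ring_nf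
    _ ≤ |S (k + n) - S b| + |S b - S a| + |S k - S a| :=
        (abs_sub _ _).trans (add_le_add_left (abs_add_le _ _) _)
    _ ≤ M * t + β * (n + t) + M * t := by
        gcongr
        · exact h₂.trans (by gcongr)
        · exact h₃.trans (by gcongr)
        · exact h₁.trans (by gcongr)
    _ = β * n + (β + 2 * M) * t := by ring

end ControlTimes

theorem exists_forall_abs_le_mul_of_affine_bounds {α : Type*} {s : Set α} {g : α → ℕ → ℝ}
    {b c : ℕ → ℝ} (hb : Tendsto b atTop (𝓝 0))
    (hbound : ∀ i, ∀ y ∈ s, ∀ n, |g y n| ≤ b i * n + c i) {ε : ℝ} (hε : 0 < ε) :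
    ∃ N : ℕ, ∀ n ≥ N, ∀ y ∈ s, |g y n| ≤ ε * n := by
  obtain ⟨i, hi⟩ := (hb.eventually (gt_mem_nhds (half_pos hε))).exists
  obtain ⟨N, hN⟩ := exists_nat_ge (c i / (ε / 2))
  refine ⟨N, fun n hn y hy => ?_⟩
  have hcn : c i ≤ ε / 2 * n :=
    (div_le_iff₀' (half_pos hε)).1 (hN.trans (Nat.cast_le.2 hn))
  calc |g y n| ≤ b i * n + c i := hbound i y hy n
    _ ≤ ε / 2 * n + ε / 2 * n := by gcongr
    _ = ε * n := by ring

section Birkhoff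

variable {α : Type*} {f : α → α} {K : Set α} {φ : α → ℝ}

theorem birkhoff_succ (n : ℕ) (x : α) :
    birkhoff f φ (n + 1) x = birkhoff f φ n x + φ (f^[n] x) :=
  Finset.sum_range_succ _ _

theorem birkhoff_add (k n : ℕ) (x : α) :
    birkhoff f φ (k + n) x = birkhoff f φ k x + birkhoff f φ n (f^[k] x) := by
  rw [birkhoff, birkhoff, birkhoff, Finset.sum_range_add]
  simp only [add_comm k, Function.iterate_add_apply]

theorem ControlledAt.abs_birkhoff_iterate_le {β : ℝ} {t : ℕ} {x : α} {M : ℝ}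
    (h : ControlledAt f K φ β t x) (hβ : 0 ≤ β) (hM : ∀ z ∈ K, |φ z| ≤ M) (k n : ℕ) :
    |birkhoff f φ n (f^[k] x)| ≤ β * n + (β + 2 * M) * t := by
  obtain ⟨horb, P, hP0, hP, hcontrol⟩ := h
  have hsub : ∀ k n, birkhoff f φ n (f^[k] x) = birkhoff f φ (k + n) x - birkhoff f φ k x :=
    fun k n => by rw [birkhoff_add]; ring
  rw [hsub]
  refine abs_sub_le_of_control (S := (birkhoff f φ · x)) hβ hP0 hP
    (fun k hk l hl hkl hc => ?_) (fun k => ?_) k n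
  · obtain ⟨hgap, hbd⟩ := hcontrol k hk l hl hkl hc
    rw [hsub, Nat.add_sub_cancel' hkl.le, Nat.cast_sub hkl.le] at hbd
    exact ⟨hgap, hbd⟩
  · rw [birkhoff_succ, add_sub_cancel_left]
    exact hM _ (horb k)

variable [TopologicalSpace α]

theorem isClosed_setOf_forall_iterate_mem (hf : Continuous f) (hK : IsClosed K) :
    IsClosed {z | ∀ n, f^[n] z ∈ K} := by
  simp only [ofPred_forall]
  exact isClosed_iInter fun n => hK.preimage (hf.iterate n)

theorem continuousOn_birkhoff (hf : Continuous f) (hφ : ContinuousOn φ K) (n : ℕ) :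
    ContinuousOn (birkhoff f φ n) {z | ∀ n, f^[n] z ∈ K} :=
  continuousOn_finsetSum _ fun i _ => hφ.comp (hf.iterate i).continuousOn fun _ hz => hz i

theorem abs_birkhoff_le_of_mapClusterPt (hf : Continuous f) (hK : IsClosed K)
    (hφ : ContinuousOn φ K) {x y : α} (horb : ∀ n, f^[n] x ∈ K)
    (hy : MapClusterPt y atTop (fun n => f^[n] x)) {n : ℕ} {c : ℝ}
    (hc : ∀ k, |birkhoff f φ n (f^[k] x)| ≤ c) : |birkhoff f φ n y| ≤ c := by
  have hclosed := (continuousOn_birkhoff hf hφ n).preimage_isClosed_of_isClosed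
    (isClosed_setOf_forall_iterate_mem hf hK)
    (isClosed_le continuous_abs continuous_const : IsClosed {r : ℝ | |r| ≤ c})
  refine (hclosed.mem_of_mapClusterPt hy (Eventually.of_forall fun k => ⟨fun j => ?_, hc k⟩)).2
  rw [← Function.iterate_add_apply]
  exact horb _

end Birkhoff

theorem birkhoff_average_tendsto_zero_on_omegaLimit_general
    {f : X → X} {K : Set X} {φ : X → ℝ}
    (hf : Continuous f) (hK : IsCompact K) (hφ : ContinuousOn φ K)
    {x : X} (hctrl : ControlledAllScales f K φ x) :
    (∀ y : X, MapClusterPt y atTop (fun n => f^[n] x) →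
      Tendsto (fun n : ℕ => birkhoff f φ n y / n) atTop (𝓝 0)) ∧
    (∀ ε : ℝ, 0 < ε → ∃ N : ℕ, ∀ n ≥ N, ∀ y : X,
      MapClusterPt y atTop (fun n => f^[n] x) → |birkhoff f φ n y| ≤ ε * n) := by
  obtain ⟨t, β, -, hβpos, -, hβ, hcontrolled⟩ := hctrl
  obtain ⟨M, hM⟩ := hK.exists_bound_of_continuousOn hφ
  have hbound : ∀ i, ∀ y ∈ {y | MapClusterPt y atTop (fun n => f^[n] x)}, ∀ n : ℕ,
      |birkhoff f φ n y| ≤ β i * n + (β i + 2 * M) * t i := fun i y hy n =>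
    abs_birkhoff_le_of_mapClusterPt hf hK.isClosed hφ (hcontrolled i).1 hy
      fun k => (hcontrolled i).abs_birkhoff_iterate_le (hβpos i).le hM k n
  have huniform : ∀ ε : ℝ, 0 < ε → ∃ N : ℕ, ∀ n ≥ N, ∀ y : X,
      MapClusterPt y atTop (fun n => f^[n] x) → |birkhoff f φ n y| ≤ ε * n :=
    fun ε hε => exists_forall_abs_le_mul_of_affine_bounds hβ hbound hε
  refine ⟨fun y hy => Asymptotics.IsLittleO.tendsto_div_nhds_zero ?_, huniform⟩
  refine Asymptotics.isLittleO_iff.2 fun ε hε => ?_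
  obtain ⟨N, hN⟩ := huniform ε hε
  filter_upwards [eventually_ge_atTop N] with n hn
  simpa only [Real.norm_eq_abs, Nat.abs_cast] using hN n hn y hy

/-- If `x ∈ K` is controlled at all scales with respect to `φ`, then the Birkhoff averages of
`φ` converge to `0` at every point of the ω-limit set of `x`, uniformly over the ω-limit set. -/
theorem birkhoff_average_tendsto_zero_on_omegaLimit
    {f : X → X} {K : Set X} {φ : X → ℝ}
    (hf : Continuous f) (hK : IsCompact K) (hφ : ContinuousOn φ K)
    {x : X} (hx : x ∈ K) (hctrl : ControlledAllScales f K φ x) :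
    (∀ y : X, MapClusterPt y atTop (fun n => f^[n] x) →
      Tendsto (fun n : ℕ => birkhoff f φ n y / n) atTop (𝓝 0)) ∧
    (∀ ε : ℝ, 0 < ε → ∃ N : ℕ, ∀ n ≥ N, ∀ y : X,
      MapClusterPt y atTop (fun n => f^[n] x) → |birkhoff f φ n y| ≤ ε * n) :=
  birkhoff_average_tendsto_zero_on_omegaLimit_general hf hK hφ hctrl
end

section
/- Conversely to the previous lemma: if Ω ⊆ K is a compact f-invariant set on which the Birkhoff averages of φ converge uniformly to zero, then every point of Ω is controlled at all scales with respect to φ. -/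
open Filter Topology Set

variable {X : Type*} [MetricSpace X]

/-! With uniform convergence, for each scale `1/(i+1)` some block length `n` works at every
point of `Ω`, hence along the whole orbit; the multiples of `n` are then control times. -/

lemma Nat.setOf_dvd_infinite {n : ℕ} (hn : 0 < n) : {m : ℕ | n ∣ m}.Infinite :=
  Set.infinite_of_forall_exists_gt fun a =>
    ⟨n * (a + 1), dvd_mul_right n _, by nlinarith⟩

lemma Nat.eq_add_of_consecutive_dvd {n k l : ℕ} (hk : n ∣ k) (hl : n ∣ l) (hkl : k < l)
    (hgap : ∀ m, n ∣ m → ¬(k < m ∧ m < l)) : l = k + n := by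
  obtain ⟨a, rfl⟩ := hk
  obtain ⟨b, rfl⟩ := hl
  have hn : 0 < n := Nat.pos_of_ne_zero (by rintro rfl; simp at hkl)
  have hab : a < b := lt_of_mul_lt_mul_left hkl (Nat.zero_le n)
  have hnext : ¬(n * a < n * (a + 1) ∧ n * (a + 1) < n * b) := hgap _ (dvd_mul_right n _)
  have hle : n * b ≤ n * (a + 1) := by
    by_contra h
    exact hnext ⟨Nat.mul_lt_mul_of_pos_left (Nat.lt_succ_self a) hn, by omega⟩
  have hab' : b ≤ a + 1 := Nat.le_of_mul_le_mul_left hle hn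
  rw [show b = a + 1 by omega, Nat.mul_succ]

lemma controlledAt_of_dvd {Y : Type*} {f : Y → Y} {K : Set Y} {φ : Y → ℝ} {β : ℝ} {n : ℕ}
    {x : Y} (hn : 0 < n) (horb : ∀ m, f^[m] x ∈ K)
    (hblock : ∀ k, n ∣ k → |birkhoff f φ n (f^[k] x)| ≤ β * n) :
    ControlledAt f K φ β n x := by
  refine ⟨horb, {m | n ∣ m}, dvd_zero n, Nat.setOf_dvd_infinite hn, ?_⟩
  intro k hk l hl hkl hgap
  rw [Nat.eq_add_of_consecutive_dvd hk hl hkl hgap, Nat.add_sub_cancel_left]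
  exact ⟨le_rfl, hblock k hk⟩

theorem controlledAllScales_of_uniform_birkhoff_average_general
    {f : X → X} {K : Set X} {φ : X → ℝ}
    {Ω : Set X} (hΩK : Ω ⊆ K) (hinv : Set.MapsTo f Ω Ω)
    (hunif : ∀ ε : ℝ, 0 < ε → ∃ N : ℕ, ∀ n ≥ N, ∀ x ∈ Ω, |birkhoff f φ n x| ≤ ε * n) :
    ∀ x ∈ Ω, ControlledAllScales f K φ x := by
  intro x hx
  have horb : ∀ m, f^[m] x ∈ Ω := fun m => hinv.iterate m hx
  choose N hN using fun i : ℕ => hunif (1 / ((i : ℝ) + 1)) (by positivity)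
  refine ⟨fun i => N i + i + 1, fun i => 1 / ((i : ℝ) + 1), fun i => Nat.succ_pos _,
    fun i => by positivity, ?_, tendsto_one_div_add_atTop_nhds_zero_nat, fun i => ?_⟩
  · exact tendsto_atTop_mono (fun i => (by omega : i ≤ N i + i + 1)) tendsto_id
  · exact controlledAt_of_dvd (Nat.succ_pos _) (fun m => hΩK (horb m))
      fun k _ => hN i _ (by dsimp only; omega) _ (horb k)

/-- Converse lemma: if `Ω ⊆ K` is a compact `f`-invariant set on which the Birkhoff averages
of `φ` converge uniformly to zero, then every point of `Ω` is controlled at all scales. -/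
theorem controlledAllScales_of_uniform_birkhoff_average
    {f : X → X} {K : Set X} {φ : X → ℝ}
    (hf : Continuous f) (hK : IsCompact K) (hφ : ContinuousOn φ K)
    {Ω : Set X} (hΩK : Ω ⊆ K) (hΩc : IsCompact Ω) (hinv : Set.MapsTo f Ω Ω)
    (hunif : ∀ ε : ℝ, 0 < ε → ∃ N : ℕ, ∀ n ≥ N, ∀ x ∈ Ω, |birkhoff f φ n x| ≤ ε * n) :
    ∀ x ∈ Ω, ControlledAllScales f K φ x :=
  controlledAllScales_of_uniform_birkhoff_average_general hΩK hinv hunif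
end

section
/- Let 𝔉 be a flip-flop family with respect to f and φ. Then every member D ∈ 𝔉 contains a point x such that the restriction of f to the ω-limit set ω(x) has positive topological entropy; in fact h_top(f|ω(x)) ≥ (log 2)/τ for some positive integer τ depending only on the flip-flop family. -/
/-!
Applying the covering property (FF2) over and over inside a member `D` of `𝔉` gives a nested
sequence of compact sets whose intersection contains a point `x` whose orbit follows any
prescribed sequence of signs of `φ`. Prescribe a sequence in which every finite binary word
occurs infinitely often. Limits of the corresponding orbit segments lie in `ω(x)` and follow
every word of length `m`. This gives `2 ^ m` points in `ω(x)` whose orbits visit the disjoint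
compact sets `{φ ≥ α}` and `{φ ≤ -α}` in different patterns. A uniform entourage `V` separating
these two sets makes the points `(V, m)`-separated, so `h_top(f | ω(x)) ≥ log 2`.
-/

open Filter Topology Set

variable {X : Type*} [MetricSpace X]

/-- A flip-flop family for `f : X → X` and `φ : K → ℝ`: two disjoint families of compact
subsets of `K` with diameters bounded by `d₀`, separated in sign by `α` (FF1), with the
covering property (FF2) and uniform expansion `lam > 1` along segments (FF3). -/
structure FlipFlopFamily (f : X → X) (K : Set X) (φ : X → ℝ) where
  pos : Set (Set X)
  neg : Set (Set X)
  disj : Disjoint pos neg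
  mem_compact : ∀ D ∈ pos ∪ neg, IsCompact D
  mem_subset : ∀ D ∈ pos ∪ neg, D ⊆ K
  mem_nonempty : ∀ D ∈ pos ∪ neg, D.Nonempty
  d₀ : ℝ
  diam_le : ∀ D ∈ pos ∪ neg, Metric.diam D ≤ d₀
  α : ℝ
  α_pos : 0 < α
  ff1_pos : ∀ D ∈ pos, ∀ x ∈ D, α < φ x
  ff1_neg : ∀ D ∈ neg, ∀ x ∈ D, φ x < -α
  ff2_pos : ∀ D ∈ pos ∪ neg, ∃ Dp, IsCompact Dp ∧ Dp ⊆ D ∧ f '' Dp ∈ pos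
  ff2_neg : ∀ D ∈ pos ∪ neg, ∃ Dm, IsCompact Dm ∧ Dm ⊆ D ∧ f '' Dm ∈ neg
  lam : ℝ
  lam_gt_one : 1 < lam
  ff3 : ∀ E : Set X, (∃ D ∈ pos ∪ neg, E ⊆ D) → f '' E ∈ pos ∪ neg →
    ∀ x ∈ E, ∀ y ∈ E, lam * dist x y ≤ dist (f x) (f y)

/-- An `𝔉`-segment of length `T`: a sequence `D 0, …, D T` with `f '' (D i) = D (i+1)`,
each `D i` contained in a member of `𝔉`, and `D T` a member of `𝔉`. `D 0` is its entrance. -/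
def IsSegment {f : X → X} {K : Set X} {φ : X → ℝ} (𝔉 : FlipFlopFamily f K φ)
    (D : ℕ → Set X) (T : ℕ) : Prop :=
  (∀ i < T, f '' D i = D (i + 1)) ∧ (∀ i ≤ T, ∃ D' ∈ 𝔉.pos ∪ 𝔉.neg, D i ⊆ D') ∧
    D T ∈ 𝔉.pos ∪ 𝔉.neg

open Function UniformSpace Uniformity

section Itinerary

variable {X ι : Type*} [TopologicalSpace X] [T2Space X] {f : X → X} {M : Set (Set X)}
  {S : ι → Set (Set X)}

theorem exists_isCompact_subset_image_iterate_succ_mem (hf : Continuous f)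
    (hcover : ∀ D ∈ M, ∀ i, ∃ E ⊆ D, IsCompact E ∧ f '' E ∈ S i)
    {C : Set X} (hC : IsCompact C) {n : ℕ} (hCn : f^[n] '' C ∈ M) (i : ι) :
    ∃ C' ⊆ C, IsCompact C' ∧ f^[n + 1] '' C' ∈ S i := by
  obtain ⟨E, hEC, hE, hfE⟩ := hcover _ hCn i
  refine ⟨C ∩ f^[n] ⁻¹' E, inter_subset_left,
    hC.inter_right (hE.isClosed.preimage (hf.iterate n)), ?_⟩
  rwa [iterate_succ', image_comp, image_inter_preimage, inter_eq_right.2 hEC]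

theorem exists_mem_forall_iterate_succ_mem_sUnion (hf : Continuous f)
    (hM_compact : ∀ D ∈ M, IsCompact D) (hM_nonempty : ∀ D ∈ M, D.Nonempty)
    (hSM : ∀ i, S i ⊆ M) (hcover : ∀ D ∈ M, ∀ i, ∃ E ⊆ D, IsCompact E ∧ f '' E ∈ S i)
    {D : Set X} (hD : D ∈ M) (s : ℕ → ι) :
    ∃ x ∈ D, ∀ n, f^[n + 1] x ∈ ⋃₀ S (s n) := by
  choose! next next_subset next_compact next_mem using
    fun C (hC : IsCompact C) n (hCn : f^[n] '' C ∈ M) =>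
      exists_isCompact_subset_image_iterate_succ_mem hf hcover hC hCn
  let C : ℕ → Set X := fun n => Nat.rec D (fun n Cn => next Cn n (s n)) n
  have hC : ∀ n, IsCompact (C n) ∧ f^[n] '' C n ∈ M := by
    intro n
    induction n with
    | zero => exact ⟨hM_compact D hD, show f^[0] '' D ∈ M by simpa using hD⟩
    | succ n ih => exact ⟨next_compact _ ih.1 n ih.2 _, hSM _ (next_mem _ ih.1 n ih.2 _)⟩
  obtain ⟨x, hx⟩ := IsCompact.nonempty_iInter_of_sequence_nonempty_isCompact_isClosed C
    (fun n => next_subset _ (hC n).1 n (hC n).2 _)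
    (fun n => image_nonempty.1 (hM_nonempty _ (hC n).2)) (hC 0).1 (fun n => (hC n).1.isClosed)
  rw [mem_iInter] at hx
  exact ⟨x, hx 0, fun n =>
    ⟨_, next_mem _ (hC n).1 n (hC n).2 _, mem_image_of_mem _ (hx (n + 1))⟩⟩

end Itinerary

/-- On the block `[k * k, k * k + 2 * k]` this spells the binary digits of `k`, so every finite
word occurs in infinitely many blocks. -/
def universalBits (p : ℕ) : Bool :=
  (Nat.sqrt p).testBit (p - Nat.sqrt p * Nat.sqrt p)

theorem universalBits_mul_self_add {k i : ℕ} (hi : i ≤ k + k) :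
    universalBits (k * k + i) = k.testBit i := by
  simp [universalBits, Nat.sqrt_add_eq k hi]

theorem frequently_universalBits_eq_testBit (c m : ℕ) :
    ∃ᶠ p in atTop, ∀ i < m, universalBits (p + i) = c.testBit i := by
  refine frequently_atTop.2 fun N => ?_
  set k := c % 2 ^ m + 2 ^ m * (N + m)
  have hk : N + m ≤ k := (Nat.le_mul_of_pos_left _ (by positivity)).trans (Nat.le_add_left _ _)
  refine ⟨k * k, (Nat.le_mul_self k).trans' (by omega), fun i hi => ?_⟩
  have low_bits : ∀ x : ℕ, x.testBit i = (x % 2 ^ m).testBit i := by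
    simp [Nat.testBit_mod_two_pow, hi]
  rw [universalBits_mul_self_add (by omega), low_bits k, low_bits c, Nat.add_mul_mod_self_left,
    Nat.mod_mod]

section OmegaLimit

variable {X ι : Type*} [TopologicalSpace X] {f : X → X}

theorem MapClusterPt.of_iterate_apply {x y : X}
    (h : MapClusterPt y atTop fun n => f^[n] (f x)) : MapClusterPt y atTop fun n => f^[n] x :=
  h.of_comp (tendsto_add_atTop_nat 1)

theorem exists_mapClusterPt_iterate_forall_mem (hf : Continuous f) {K : Set X} (hK : IsCompact K)
    {R : ι → Set X} (hR : ∀ i, IsClosed (R i)) {x : X} (hxK : ∀ n, f^[n] x ∈ K)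
    {s : ℕ → ι} (hx : ∀ n, f^[n] x ∈ R (s n)) {w : ℕ → ι} {m : ℕ}
    (hw : ∃ᶠ p in atTop, ∀ i < m, s (p + i) = w i) :
    ∃ y, MapClusterPt y atTop (fun n => f^[n] x) ∧ ∀ i < m, f^[i] y ∈ R (w i) := by
  set occurrences := {p | ∀ i < m, s (p + i) = w i}
  have : NeBot (atTop ⊓ 𝓟 occurrences) := frequently_mem_iff_neBot.1 hw
  obtain ⟨y, -, hy⟩ := hK.exists_mapClusterPt (f := atTop ⊓ 𝓟 occurrences)
    (u := fun n => f^[n] x) (le_principal_iff.2 (mem_map.2 (univ_mem' hxK)))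
  refine ⟨y, hy.mono inf_le_left, fun i hi => ?_⟩
  refine (hR (w i)).mem_of_mapClusterPt (hy.continuousAt_comp (hf.iterate i).continuousAt) ?_
  filter_upwards [mem_inf_of_right (mem_principal_self _)] with p hp
  simpa [← iterate_add_apply, add_comm i, hp i hi] using hx (p + i)

end OmegaLimit

theorem Nat.exists_lt_testBit_ne {c c' m : ℕ} (hc : c < 2 ^ m) (hc' : c' < 2 ^ m) (hne : c ≠ c') :
    ∃ i < m, c.testBit i ≠ c'.testBit i := by
  obtain ⟨i, hi⟩ := Nat.exists_testBit_ne_of_ne hne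
  refine ⟨i, lt_of_not_ge fun him => hi ?_, hi⟩
  rw [Nat.testBit_lt_two_pow (hc.trans_le (Nat.pow_le_pow_right two_pos him)),
    Nat.testBit_lt_two_pow (hc'.trans_le (Nat.pow_le_pow_right two_pos him))]

namespace Dynamics

variable {X : Type*} {f : X → X} {F : Set X} {R : Bool → Set X} {V : SetRel X X}

theorem disjoint_ball_dynEntourage_of_testBit_ne
    (hRV : Pairwise (Disjoint on fun b => ⋃ x ∈ R b, ball x V)) {c c' m i : ℕ} {y y' : X}
    (hy : ∀ i < m, f^[i] y ∈ R (c.testBit i)) (hy' : ∀ i < m, f^[i] y' ∈ R (c'.testBit i))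
    (hi : i < m) (hne : c.testBit i ≠ c'.testBit i) :
    Disjoint (ball y (dynEntourage f V m)) (ball y' (dynEntourage f V m)) :=
  disjoint_left.2 fun _ hz hz' => disjoint_left.1 (hRV hne)
    (mem_iUnion₂_of_mem (hy i hi) (mem_ball_dynEntourage.1 hz i hi))
    (mem_iUnion₂_of_mem (hy' i hi) (mem_ball_dynEntourage.1 hz' i hi))

variable [UniformSpace X]

theorem two_pow_le_netMaxcard (hV : V ∈ 𝓤 X)
    (hRV : Pairwise (Disjoint on fun b => ⋃ x ∈ R b, ball x V))
    (h : ∀ c m : ℕ, ∃ y ∈ F, ∀ i < m, f^[i] y ∈ R (c.testBit i)) (m : ℕ) :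
    2 ^ m ≤ netMaxcard f F V m := by
  classical
  choose y hyF hy using fun c => h c m
  have hsep : ∀ c < 2 ^ m, ∀ c' < 2 ^ m, c ≠ c' →
      Disjoint (ball (y c) (dynEntourage f V m)) (ball (y c') (dynEntourage f V m)) :=
    fun c hc c' hc' hne =>
      have ⟨i, hi, hbit⟩ := Nat.exists_lt_testBit_ne hc hc' hne
      disjoint_ball_dynEntourage_of_testBit_ne hRV (hy c) (hy c') hi hbit
  have hinj : InjOn y (Finset.range (2 ^ m) : Set ℕ) := fun c hc c' hc' heq => by
    by_contra hne
    refine (hsep c (by simpa using hc) c' (by simpa using hc') hne).ne_of_mem ?_ ?_ heq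
    all_goals exact mem_ball_dynEntourage.2 fun k _ => mem_ball_self _ hV
  have hnet : IsDynNetIn f F V m ((Finset.range (2 ^ m)).image y : Set X) := by
    refine ⟨?_, ?_⟩
    · simpa [Set.subset_def] using fun c _ => hyF c
    · simp only [Finset.coe_image, Finset.coe_range]
      rintro _ ⟨c, hc, rfl⟩ _ ⟨c', hc', rfl⟩ hne
      exact hsep c hc c' hc' (ne_of_apply_ne y hne)
  simpa [Finset.card_image_of_injOn hinj] using hnet.card_le_netMaxcard

theorem log_two_le_coverEntropy (hR₁ : IsCompact (R true)) (hR₀ : IsClosed (R false))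
    (hR : Disjoint (R true) (R false))
    (h : ∀ c m : ℕ, ∃ y ∈ F, ∀ i < m, f^[i] y ∈ R (c.testBit i)) :
    (Real.log 2 : EReal) ≤ coverEntropy f F := by
  obtain ⟨V, hV, hRV⟩ := hR.exists_uniform_thickening hR₁ hR₀
  have hRV' : Pairwise (Disjoint on fun b => ⋃ x ∈ R b, ball x V) := by
    rintro (_ | _) (_ | _) hne <;> simp_all [onFun, hRV.symm]
  calc (Real.log 2 : EReal) = ExpGrowth.expGrowthSup fun n => 2 ^ n := by
        rw [ExpGrowth.expGrowthSup_pow, ← ENNReal.ofReal_ofNat, ENNReal.log_ofReal_of_pos two_pos]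
    _ ≤ netEntropyEntourage f F V := ExpGrowth.expGrowthSup_monotone fun m => by
        simpa using ENat.toENNReal_le.2 (two_pow_le_netMaxcard hV hRV' h m)
    _ ≤ coverEntropy f F := netEntropyEntourage_le_coverEntropy f F hV

end Dynamics

namespace FlipFlopFamily

variable {f : X → X} {K : Set X} {φ : X → ℝ} (𝔉 : FlipFlopFamily f K φ)

def side : Bool → Set (Set X)
  | true => 𝔉.pos
  | false => 𝔉.neg

theorem side_subset : ∀ b, 𝔉.side b ⊆ 𝔉.pos ∪ 𝔉.neg
  | true => subset_union_left
  | false => subset_union_right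

theorem exists_isCompact_subset_image_mem_side {D : Set X} (hD : D ∈ 𝔉.pos ∪ 𝔉.neg) :
    ∀ b, ∃ E ⊆ D, IsCompact E ∧ f '' E ∈ 𝔉.side b
  | true => let ⟨E, hE, hED, hfE⟩ := 𝔉.ff2_pos D hD; ⟨E, hED, hE, hfE⟩
  | false => let ⟨E, hE, hED, hfE⟩ := 𝔉.ff2_neg D hD; ⟨E, hED, hE, hfE⟩

def signRegion (b : Bool) : Set X :=
  K ∩ φ ⁻¹' cond b (Ici 𝔉.α) (Iic (-𝔉.α))

theorem sUnion_side_subset_signRegion : ∀ b, ⋃₀ 𝔉.side b ⊆ 𝔉.signRegion b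
  | true => sUnion_subset fun D hD _ hy =>
      ⟨𝔉.mem_subset D (Or.inl hD) hy, (𝔉.ff1_pos D hD _ hy).le⟩
  | false => sUnion_subset fun D hD _ hy =>
      ⟨𝔉.mem_subset D (Or.inr hD) hy, (𝔉.ff1_neg D hD _ hy).le⟩

theorem isCompact_signRegion (hK : IsCompact K) (hφ : ContinuousOn φ K) (b : Bool) :
    IsCompact (𝔉.signRegion b) :=
  hK.of_isClosed_subset (hφ.preimage_isClosed_of_isClosed hK.isClosed
    (by cases b; exacts [isClosed_Iic, isClosed_Ici])) inter_subset_left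

theorem disjoint_signRegion : Disjoint (𝔉.signRegion true) (𝔉.signRegion false) :=
  disjoint_left.2 fun _ h₁ h₀ => by
    have : 𝔉.α ≤ -𝔉.α := h₁.2.trans h₀.2
    linarith [𝔉.α_pos]

end FlipFlopFamily

/-- Positive entropy from flip-flop families: there is a positive integer `τ` depending only
on the flip-flop family such that every member `D` of `𝔉` contains a point `x` with
`h_top(f | ω(x)) ≥ (log 2)/τ`, where `ω(x)` is the ω-limit set of `x` and `h_top` is the
topological (cover) entropy. -/
theorem flipFlop_positive_entropy
    {f : X → X} {K : Set X} {φ : X → ℝ}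
    (hf : Continuous f) (hK : IsCompact K) (hφ : ContinuousOn φ K)
    (𝔉 : FlipFlopFamily f K φ) :
    ∃ τ : ℕ, 0 < τ ∧ ∀ D ∈ 𝔉.pos ∪ 𝔉.neg, ∃ x ∈ D,
      ((Real.log 2 / τ : ℝ) : EReal) ≤
        Dynamics.coverEntropy f {y : X | MapClusterPt y atTop fun n => f^[n] x} := by
  refine ⟨1, one_pos, fun D hD => ?_⟩
  obtain ⟨x, hxD, hx⟩ := exists_mem_forall_iterate_succ_mem_sUnion hf 𝔉.mem_compact
    𝔉.mem_nonempty 𝔉.side_subset (fun _ hD => 𝔉.exists_isCompact_subset_image_mem_side hD) hD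
    universalBits
  refine ⟨x, hxD, ?_⟩
  have horbit : ∀ n, f^[n] (f x) ∈ 𝔉.signRegion (universalBits n) := fun n =>
    𝔉.sUnion_side_subset_signRegion _ (by simpa only [iterate_succ_apply] using hx n)
  have hwords : ∀ c m : ℕ, ∃ y ∈ {y | MapClusterPt y atTop fun n => f^[n] x},
      ∀ i < m, f^[i] y ∈ 𝔉.signRegion (c.testBit i) := fun c m =>
    have ⟨y, hy, hyR⟩ := exists_mapClusterPt_iterate_forall_mem hf hK
      (fun b => (𝔉.isCompact_signRegion hK hφ b).isClosed) (fun n => (horbit n).1) horbit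
      (frequently_universalBits_eq_testBit c m)
    ⟨y, hy.of_iterate_apply, hyR⟩
  simpa using Dynamics.log_two_le_coverEntropy (𝔉.isCompact_signRegion hK hφ true)
    (𝔉.isCompact_signRegion hK hφ false).isClosed 𝔉.disjoint_signRegion hwords
end

section
/- Limit points of controlled points are controlled: let K be compact, f continuous, φ : K → ℝ continuous, fix β > 0 and t ∈ ℕ*. Suppose x_j → x where each x_j is (β, t, T_j)-controlled with T_j → ∞ (so all iterates f^i(x_j), 0 ≤ i < T_j, lie in K). Then the full forward orbit of x lies in K and x is (β, t, ∞)-controlled. -/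
open Filter Topology Set

variable {X : Type*} [MetricSpace X]

/-- `x` is `(β, t, T)`-controlled for finite `T`: the first `T` iterates stay in `K` and
there is a set `P ⊆ {0, …, T}` of control times containing `0` and `T` whose consecutive
elements `k < l` satisfy `l - k ≤ t` and `|birkhoff (l-k) (f^[k] x)| ≤ β * (l - k)`. -/
def ControlledFinAt (f : X → X) (K : Set X) (φ : X → ℝ) (β : ℝ) (t T : ℕ) (x : X) : Prop :=
  (∀ i < T, f^[i] x ∈ K) ∧
  ∃ P : Set ℕ, 0 ∈ P ∧ T ∈ P ∧ P ⊆ Set.Icc 0 T ∧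
    ∀ k ∈ P, ∀ l ∈ P, k < l → (∀ m ∈ P, ¬(k < m ∧ m < l)) →
      l - k ≤ t ∧ |birkhoff f φ (l - k) (f^[k] x)| ≤ β * ((l - k : ℕ) : ℝ)

/-!
Along a subsequence the control-time sets of the `xseq j` converge pointwise (diagonal
extraction), to a set `P` containing `0`. Two consecutive elements of `P` are eventually
consecutive control times of the subsequence, so the gap bound passes to `P` directly and the
Birkhoff bound passes to the limit by continuity of `φ ∘ f^[i]` on `K`. Since the `T j` grow and
the gaps stay at most `t`, every window `[N, N + t]` eventually contains a control time, so
`P` is infinite.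
-/

lemma tendsto_birkhoff {ι : Type*} {L : Filter ι} {f : X → X} {K : Set X} {φ : X → ℝ}
    (hf : Continuous f) (hφ : ContinuousOn φ K) {n : ℕ} {y : X} {ys : ι → X}
    (hys : Tendsto ys L (𝓝 y)) (hy : ∀ i < n, f^[i] y ∈ K)
    (hysK : ∀ᶠ m in L, ∀ i < n, f^[i] (ys m) ∈ K) :
    Tendsto (fun m => birkhoff f φ n (ys m)) L (𝓝 (birkhoff f φ n y)) := by
  refine tendsto_finsetSum _ fun i hi => ?_
  rw [Finset.mem_range] at hi
  refine (hφ _ (hy i hi)).tendsto.comp (tendsto_nhdsWithin_iff.mpr ⟨?_, ?_⟩)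
  · exact ((hf.iterate i).tendsto y).comp hys
  · exact hysK.mono fun m hm => hm i hi

/-- Diagonal extraction, through sequential compactness of `α → Bool`. -/
lemma exists_strictMono_eventually_mem_iff {α : Type*} [Countable α] (Q : ℕ → Set α) :
    ∃ ψ : ℕ → ℕ, StrictMono ψ ∧ ∃ P : Set α, ∀ a, ∀ᶠ m in atTop, (a ∈ Q (ψ m) ↔ a ∈ P) := by
  classical
  obtain ⟨L, -, ψ, hψ, hL⟩ :=
    isCompact_univ.tendsto_subseq (x := fun j a => decide (a ∈ Q j)) fun _ => mem_univ _
  refine ⟨ψ, hψ, {a | L a}, fun a => ?_⟩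
  have hLa := tendsto_pi_nhds.mp hL a
  rw [nhds_discrete, tendsto_pure] at hLa
  filter_upwards [hLa] with m hm
  simp [← hm]

section ControlTimes

variable {t : ℕ}

lemma exists_mem_Icc_add_of_gaps_le {P : Set ℕ} {T N : ℕ} (h0 : 0 ∈ P) (hT : T ∈ P)
    (hgap : ∀ k ∈ P, ∀ l ∈ P, k < l → (∀ m ∈ P, ¬(k < m ∧ m < l)) → l - k ≤ t)
    (hN : N ≤ T) : ∃ n ∈ P, N ≤ n ∧ n ≤ N + t := by
  classical
  have hl : ∃ n, n ∈ P ∧ N ≤ n := ⟨T, hT, hN⟩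
  set l := Nat.find hl
  set k := Nat.findGreatest (· ∈ P) N
  have hkP : k ∈ P := Nat.findGreatest_spec (Nat.zero_le N) h0
  have hkN : k ≤ N := Nat.findGreatest_le N
  obtain ⟨hlP, hNl⟩ := Nat.find_spec hl
  refine ⟨l, hlP, hNl, ?_⟩
  rcases eq_or_lt_of_le (hkN.trans hNl) with hkl | hkl
  · omega
  -- the last control time `≤ N` and the first one `≥ N` are consecutive
  have := hgap k hkP l hlP hkl fun m hm ⟨hkm, hml⟩ => by
    rcases le_total m N with hmN | hNm
    · exact Nat.findGreatest_is_greatest hkm hmN hm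
    · exact Nat.find_min hl hml ⟨hm, hNm⟩
  omega

variable {Q : ℕ → Set ℕ} {P : Set ℕ}

lemma eventually_forall_le_mem_iff (hP : ∀ a, ∀ᶠ m in atTop, (a ∈ Q m ↔ a ∈ P)) (N : ℕ) :
    ∀ᶠ m in atTop, ∀ i ≤ N, (i ∈ Q m ↔ i ∈ P) :=
  (finite_Iic N).eventually_all.mpr fun i _ => hP i

lemma infinite_of_eventually_mem_iff {T : ℕ → ℕ} (hT : Tendsto T atTop atTop)
    (hQ0 : ∀ m, 0 ∈ Q m) (hQT : ∀ m, T m ∈ Q m)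
    (hgap : ∀ m, ∀ k ∈ Q m, ∀ l ∈ Q m, k < l → (∀ p ∈ Q m, ¬(k < p ∧ p < l)) → l - k ≤ t)
    (hP : ∀ a, ∀ᶠ m in atTop, (a ∈ Q m ↔ a ∈ P)) : P.Infinite := by
  refine infinite_of_forall_exists_gt fun N => ?_
  obtain ⟨m, hm, hTm⟩ :=
    ((eventually_forall_le_mem_iff hP (N + 1 + t)).and (hT.eventually_ge_atTop (N + 1 + t))).exists
  obtain ⟨n, hn, hNn, hnN⟩ :=
    exists_mem_Icc_add_of_gaps_le (hQ0 m) (hQT m) (hgap m) (le_of_add_le_left hTm)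
  exact ⟨n, (hm n hnN).mp hn, hNn⟩

lemma eventually_consecutive_of_eventually_mem_iff (hP : ∀ a, ∀ᶠ m in atTop, (a ∈ Q m ↔ a ∈ P))
    {k l : ℕ} (hk : k ∈ P) (hl : l ∈ P) (hkl : k < l) (hgap : ∀ p ∈ P, ¬(k < p ∧ p < l)) :
    ∀ᶠ m in atTop, k ∈ Q m ∧ l ∈ Q m ∧ ∀ p ∈ Q m, ¬(k < p ∧ p < l) := by
  filter_upwards [eventually_forall_le_mem_iff hP l] with m hm
  exact ⟨(hm k hkl.le).mpr hk, (hm l le_rfl).mpr hl,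
    fun p hp hkpl => hgap p ((hm p hkpl.2.le).mp hp) hkpl⟩

end ControlTimes

theorem controlledAt_of_limit_general
    {f : X → X} {K : Set X} {φ : X → ℝ}
    (hf : Continuous f) (hK : IsCompact K) (hφ : ContinuousOn φ K)
    {β : ℝ} {t : ℕ}
    {xseq : ℕ → X} {x : X} (hlim : Tendsto xseq atTop (𝓝 x))
    {T : ℕ → ℕ} (hTtop : Tendsto T atTop atTop)
    (hctrl : ∀ j, ControlledFinAt f K φ β t (T j) (xseq j)) :
    (∀ n : ℕ, f^[n] x ∈ K) ∧ ControlledAt f K φ β t x := by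
  have horb (n : ℕ) : f^[n] x ∈ K :=
    hK.isClosed.mem_of_tendsto (((hf.iterate n).tendsto x).comp hlim)
      ((hTtop.eventually_gt_atTop n).mono fun j hj => (hctrl j).1 n hj)
  choose Q hQ0 hQT _ hQgap using fun j => (hctrl j).2
  obtain ⟨ψ, hψ, P, hP⟩ := exists_strictMono_eventually_mem_iff Q
  have hTψ : Tendsto (T ∘ ψ) atTop atTop := hTtop.comp hψ.tendsto_atTop
  refine ⟨horb, horb, P, (hP 0).exists.elim fun m hm => hm.mp (hQ0 _),
    infinite_of_eventually_mem_iff hTψ (fun _ => hQ0 _) (fun _ => hQT _)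
      (fun _ k hk l hl hkl h => (hQgap _ k hk l hl hkl h).1) hP, ?_⟩
  intro k hk l hl hkl hgap
  have hev : ∀ᶠ m in atTop, l ≤ T (ψ m) ∧ l - k ≤ t ∧
      |birkhoff f φ (l - k) (f^[k] (xseq (ψ m)))| ≤ β * ((l - k : ℕ) : ℝ) := by
    filter_upwards [eventually_consecutive_of_eventually_mem_iff hP hk hl hkl hgap,
      hTψ.eventually_ge_atTop l] with m ⟨hkm, hlm, hgapm⟩ hTm
    exact ⟨hTm, hQgap _ k hkm l hlm hkl hgapm⟩
  have hlimψ : Tendsto (fun m => f^[k] (xseq (ψ m))) atTop (𝓝 (f^[k] x)) :=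
    ((hf.iterate k).tendsto x).comp (hlim.comp hψ.tendsto_atTop)
  have hbirk := tendsto_birkhoff (n := l - k) hf hφ hlimψ
    (fun i _ => by rw [← Function.iterate_add_apply]; exact horb _)
    (hev.mono fun m hm i hi => by
      rw [← Function.iterate_add_apply]
      exact (hctrl (ψ m)).1 (i + k) (by have := hm.1; omega))
  exact ⟨hev.exists.elim fun m hm => hm.2.1, le_of_tendsto hbirk.abs (hev.mono fun m hm => hm.2.2)⟩

/-- Limit points of controlled points are controlled: if `xseq j → x` with each `xseq j`
`(β, t, T j)`-controlled and `T j → ∞`, then the full forward orbit of `x` stays in `K`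
and `x` is `(β, t, ∞)`-controlled. -/
theorem controlledAt_of_limit
    {f : X → X} {K : Set X} {φ : X → ℝ}
    (hf : Continuous f) (hK : IsCompact K) (hφ : ContinuousOn φ K)
    {β : ℝ} {t : ℕ} (hβ : 0 < β) (ht : 0 < t)
    {xseq : ℕ → X} {x : X} (hlim : Tendsto xseq atTop (𝓝 x))
    {T : ℕ → ℕ} (hTtop : Tendsto T atTop atTop)
    (hctrl : ∀ j, ControlledFinAt f K φ β t (T j) (xseq j)) :
    (∀ n : ℕ, f^[n] x ∈ K) ∧ ControlledAt f K φ β t x :=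
  controlledAt_of_limit_general hf hK hφ hlim hTtop hctrl
end

section
/- Existence of safety domains for induced maps: let f be a homeomorphism of a compact manifold, U, U_1, …, U_k open sets and n_1, …, n_k positive integers such that the closures Ū_i are pairwise disjoint and contained in U, f^j(Ū_i) ∩ Ū = ∅ for all 0 < j < n_i, and f^{n_i}(Ū_i) ⊆ U. Then for every family of open neighborhoods Ũ_i ⊇ Ū_i there exist open sets V_{i,j} (1 ≤ i ≤ k, 0 ≤ j ≤ n_i − 1) with V̄_{i,j} ⊆ f^j(Ũ_i), pairwise disjoint closures, Ū_i ⊆ V_{i,0} ⊆ U, f(V̄_{i,j}) ⊆ V_{i,j+1} for j < n_i − 1, and f(V̄_{i,n_i−1}) ⊆ U. -/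
/-! Since `f` is injective and the intermediate iterates of each `Ū_i` avoid `Ū ⊇ Ū_{i'}`, the
compact sets `f^j(Ū_i)`, `j < n_i`, are pairwise disjoint, so they have pairwise disjoint open
neighbourhoods `W_{i,j} ⊆ f^j(Ũ_i ∩ U)`. Along each orbit segment one then chooses `V_{i,j}`
backwards from `j = n_i - 1`: by regularity, `V_{i,j}` can be taken with closure inside
`W_{i,j} ∩ f⁻¹(V_{i,j+1})` (resp. `W_{i,j} ∩ f⁻¹(U)` at the end), an open set containing the
compact set `f^j(Ū_i)`. -/

open Set

variable {X : Type*} [MetricSpace X] [CompactSpace X]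

open Function

theorem IsOpenMap.iterate {Y : Type*} [TopologicalSpace Y] {f : Y → Y} (hf : IsOpenMap f) :
    ∀ n : ℕ, IsOpenMap f^[n]
  | 0 => IsOpenMap.id
  | n + 1 => (IsOpenMap.iterate hf n).comp hf

theorem pairwiseDisjoint_iterate_image {α ι : Type*} {f : α → α} (hf : Injective f)
    {A : ι → Set α} {B : Set α} {n : ι → ℕ} (hA : Pairwise (Disjoint on A))
    (hAB : ∀ i, A i ⊆ B) (hB : ∀ i, ∀ j : ℕ, 0 < j → j < n i → Disjoint (f^[j] '' A i) B) :
    {p : ι × ℕ | p.2 < n p.1}.PairwiseDisjoint fun p => f^[p.2] '' A p.1 := by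
  rintro ⟨i, j⟩ hj ⟨i', j'⟩ hj' hne
  wlog hle : j' ≤ j generalizing i j i' j'
  · exact (this i' j' hj' i j hj hne.symm (le_of_not_ge hle)).symm
  obtain ⟨d, rfl⟩ := Nat.exists_eq_add_of_le hle
  simp only [onFun, iterate_add, image_comp]
  rw [disjoint_image_iff (hf.iterate j')]
  rcases Nat.eq_zero_or_pos d with rfl | hd
  · have hii : i ≠ i' := fun h => hne (by rw [h, add_zero])
    simpa using hA hii
  · exact (hB i d hd (lt_of_le_of_lt (Nat.le_add_left d j') hj)).mono_right (hAB i')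

theorem Set.PairwiseDisjoint.exists_isOpen_between {Y ι : Type*} [TopologicalSpace Y] [T2Space Y]
    {s : Set ι} {K O : ι → Set Y} (hs : s.Finite) (hd : s.PairwiseDisjoint K)
    (hK : ∀ p ∈ s, IsCompact (K p)) (hO : ∀ p, IsOpen (O p)) (hKO : ∀ p ∈ s, K p ⊆ O p) :
    ∃ W : ι → Set Y, (∀ p, IsOpen (W p)) ∧ (∀ p ∈ s, K p ⊆ W p) ∧ (∀ p, W p ⊆ O p) ∧
      s.PairwiseDisjoint W := by
  have hnhds : s.PairwiseDisjoint fun p => nhdsSet (K p) := fun p hp q hq hpq =>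
    separatedNhds_iff_disjoint.1 (.of_isCompact_isCompact (hK p hp) (hK q hq) (hd hp hq hpq))
  obtain ⟨t, ht, htd⟩ := hnhds.exists_mem_filter hs
  refine ⟨fun p => interior (t p ∩ O p), fun _ => isOpen_interior, fun p hp => ?_,
    fun _ => interior_subset.trans inter_subset_right, fun p hp q hq hpq => ?_⟩
  · exact subset_interior_iff_mem_nhdsSet.2
      (Filter.inter_mem (ht p) ((hO p).mem_nhdsSet.2 (hKO p hp)))
  · exact (htd hp hq hpq).mono (interior_subset.trans inter_subset_left)
      (interior_subset.trans inter_subset_left)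

theorem IsCompact.exists_isOpen_closure_subset_preimage {Y : Type*} [TopologicalSpace Y]
    [RegularSpace Y] {f : Y → Y} (hf : Continuous f) {K O T : Set Y} (hK : IsCompact K)
    (hO : IsOpen O) (hKO : K ⊆ O) (hT : IsOpen T) (hKT : f '' K ⊆ T) :
    ∃ V, IsOpen V ∧ K ⊆ V ∧ closure V ⊆ O ∧ f '' closure V ⊆ T := by
  obtain ⟨V, hVo, hKV, hVsub⟩ := hK.exists_isOpen_closure_subset
    ((hO.inter (hT.preimage hf)).mem_nhdsSet.2 (subset_inter hKO (image_subset_iff.1 hKT)))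
  exact ⟨V, hVo, hKV, hVsub.trans inter_subset_left,
    image_subset_iff.2 (hVsub.trans inter_subset_right)⟩

theorem IsCompact.exists_isOpen_orbit_chain {Y : Type*} [TopologicalSpace Y] [RegularSpace Y]
    {f : Y → Y} (hf : Continuous f) (n : ℕ) {K T : Set Y} {O : ℕ → Set Y} (hK : IsCompact K)
    (hO : ∀ j ≤ n, IsOpen (O j)) (hKO : ∀ j ≤ n, f^[j] '' K ⊆ O j) (hT : IsOpen T)
    (hKT : f^[n + 1] '' K ⊆ T) :
    ∃ V : ℕ → Set Y, (∀ j ≤ n, IsOpen (V j)) ∧ K ⊆ V 0 ∧ (∀ j ≤ n, closure (V j) ⊆ O j) ∧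
      (∀ j < n, f '' closure (V j) ⊆ V (j + 1)) ∧ f '' closure (V n) ⊆ T := by
  induction n generalizing K O with
  | zero =>
    obtain ⟨V, hVo, hKV, hVO, hVT⟩ := hK.exists_isOpen_closure_subset_preimage hf
      (hO 0 le_rfl) (by simpa using hKO 0 le_rfl) hT (by simpa using hKT)
    refine ⟨fun _ => V, fun _ _ => hVo, hKV, fun j hj => ?_,
      fun j hj => absurd hj j.not_lt_zero, hVT⟩
    rwa [Nat.le_zero.1 hj]
  | succ n ih =>
    have himage : ∀ j, f^[j] '' (f '' K) = f^[j + 1] '' K := fun j => by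
      rw [← image_comp, ← iterate_succ]
    obtain ⟨V', hV'o, hKV', hV'O, hV'f, hV'T⟩ := ih (hK.image hf)
      (fun j hj => hO (j + 1) (by omega)) (fun j hj => himage j ▸ hKO (j + 1) (by omega))
      (himage _ ▸ hKT)
    obtain ⟨V, hVo, hKV, hVO, hVf⟩ := hK.exists_isOpen_closure_subset_preimage hf
      (hO 0 (Nat.zero_le _)) (by simpa using hKO 0 (Nat.zero_le _)) (hV'o 0 (Nat.zero_le _))
      (by simpa using hKV')
    refine ⟨fun | 0 => V | j + 1 => V' j, ?_, hKV, ?_, ?_, hV'T⟩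
    · rintro (_ | j) hj
      exacts [hVo, hV'o j (by omega)]
    · rintro (_ | j) hj
      exacts [hVO, hV'O j (by omega)]
    · rintro (_ | j) hj
      exacts [hVf, hV'f j (by omega)]

theorem safety_domain_exists_general
    (f : X ≃ₜ X) {k : ℕ} (U : Set X) (Ui : Fin k → Set X) (ni : Fin k → ℕ)
    (hU : IsOpen U)
    (hni : ∀ i, 0 < ni i)
    (hdisj : ∀ i j : Fin k, i ≠ j → Disjoint (closure (Ui i)) (closure (Ui j)))
    (hsubU : ∀ i, closure (Ui i) ⊆ U)
    (havoid : ∀ i, ∀ j : ℕ, 0 < j → j < ni i →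
      Disjoint ((f : X → X)^[j] '' closure (Ui i)) (closure U))
    (hreturn : ∀ i, (f : X → X)^[ni i] '' closure (Ui i) ⊆ U)
    (Ut : Fin k → Set X) (hUt : ∀ i, IsOpen (Ut i)) (hUtsub : ∀ i, closure (Ui i) ⊆ Ut i) :
    ∃ V : Fin k → ℕ → Set X,
      (∀ i, ∀ j < ni i, IsOpen (V i j)) ∧
      (∀ i, ∀ j < ni i, closure (V i j) ⊆ (f : X → X)^[j] '' (Ut i)) ∧
      (∀ i i' : Fin k, ∀ j j' : ℕ, j < ni i → j' < ni i' → (i, j) ≠ (i', j') →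
        Disjoint (closure (V i j)) (closure (V i' j'))) ∧
      (∀ i, closure (Ui i) ⊆ V i 0 ∧ V i 0 ⊆ U) ∧
      (∀ i, ∀ j : ℕ, j + 1 < ni i → (f : X → X) '' closure (V i j) ⊆ V i (j + 1)) ∧
      (∀ i, (f : X → X) '' closure (V i (ni i - 1)) ⊆ U) := by
  set s : Set (Fin k × ℕ) := {p | p.2 < ni p.1}
  have hs : s.Finite := (finite_univ.prod (finite_Iio (Finset.univ.sup ni))).subset
    fun p hp => ⟨trivial, lt_of_lt_of_le hp (Finset.le_sup (f := ni) (Finset.mem_univ _))⟩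
  have hKd := pairwiseDisjoint_iterate_image f.injective hdisj
    (fun i => (hsubU i).trans subset_closure) havoid
  obtain ⟨W, hWo, hKW, hWO, hWd⟩ :=
    hKd.exists_isOpen_between (O := fun p => f^[p.2] '' (Ut p.1 ∩ U)) hs
    (fun p _ => isClosed_closure.isCompact.image (f.continuous.iterate _))
    (fun p => f.isOpenMap.iterate _ _ ((hUt _).inter hU))
    (fun p _ => image_mono (subset_inter (hUtsub _) (hsubU _)))
  choose V hVo hKV hVW hVf hVU using fun i =>
    isClosed_closure.isCompact.exists_isOpen_orbit_chain f.continuous (ni i - 1)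
      (O := fun j => W (i, j)) (fun j _ => hWo _)
      (fun j hj => hKW (i, j) (show j < ni i by have := hni i; omega))
      hU (by rw [Nat.sub_add_cancel (hni i)]; exact hreturn i)
  refine ⟨V, fun i j hj => hVo i j (by omega), fun i j hj => ?_, fun i i' j j' hj hj' hne => ?_,
    fun i => ⟨hKV i, ?_⟩, fun i j hj => hVf i j (by omega), hVU⟩
  · exact (hVW i j (by omega)).trans ((hWO _).trans (image_mono inter_subset_left))
  · exact (hWd hj hj' hne).mono (hVW i j (by omega)) (hVW i' j' (by omega))
  · have hW0 : W (i, 0) ⊆ Ut i ∩ U := by simpa using hWO (i, 0)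
    exact subset_closure.trans ((hVW i 0 (Nat.zero_le _)).trans (hW0.trans inter_subset_right))

/-- Existence of safety domains for induced maps: given a homeomorphism `f` of a compact
space, open sets `U, U₁, …, U_k` and return times `n₁, …, n_k` defining an induced map
(the closures `Ū_i` are pairwise disjoint and contained in `U`, the intermediate iterates
of `Ū_i` avoid `Ū`, and `f^{n_i}(Ū_i) ⊆ U`), for every family of open neighborhoods
`Ũ_i ⊇ Ū_i` there are open sets `V i j` (`0 ≤ j < n_i`) with `closure (V i j) ⊆ f^j(Ũ_i)`,
pairwise disjoint closures, `Ū_i ⊆ V i 0 ⊆ U`, `f(closure (V i j)) ⊆ V i (j+1)` and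
`f(closure (V i (n_i - 1))) ⊆ U`. -/
theorem safety_domain_exists
    (f : X ≃ₜ X) {k : ℕ} (U : Set X) (Ui : Fin k → Set X) (ni : Fin k → ℕ)
    (hU : IsOpen U) (hUi : ∀ i, IsOpen (Ui i)) (hUine : ∀ i, (Ui i).Nonempty)
    (hni : ∀ i, 0 < ni i)
    (hdisj : ∀ i j : Fin k, i ≠ j → Disjoint (closure (Ui i)) (closure (Ui j)))
    (hsubU : ∀ i, closure (Ui i) ⊆ U)
    (havoid : ∀ i, ∀ j : ℕ, 0 < j → j < ni i →
      Disjoint ((f : X → X)^[j] '' closure (Ui i)) (closure U))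
    (hreturn : ∀ i, (f : X → X)^[ni i] '' closure (Ui i) ⊆ U)
    (Ut : Fin k → Set X) (hUt : ∀ i, IsOpen (Ut i)) (hUtsub : ∀ i, closure (Ui i) ⊆ Ut i) :
    ∃ V : Fin k → ℕ → Set X,
      (∀ i, ∀ j < ni i, IsOpen (V i j)) ∧
      (∀ i, ∀ j < ni i, closure (V i j) ⊆ (f : X → X)^[j] '' (Ut i)) ∧
      (∀ i i' : Fin k, ∀ j j' : ℕ, j < ni i → j' < ni i' → (i, j) ≠ (i', j') →
        Disjoint (closure (V i j)) (closure (V i' j'))) ∧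
      (∀ i, closure (Ui i) ⊆ V i 0 ∧ V i 0 ⊆ U) ∧
      (∀ i, ∀ j : ℕ, j + 1 < ni i → (f : X → X) '' closure (V i j) ⊆ V i (j + 1)) ∧
      (∀ i, (f : X → X) '' closure (V i (ni i - 1)) ⊆ U) :=
  safety_domain_exists_general f U Ui ni hU hni hdisj hsubU havoid hreturn Ut hUt hUtsub
end
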